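/- Let E be a real Banach space and let X : E → E be a continuous vector field with modulus of continuity ε log ε: there exists a constant C > 0 such that ‖X(a) − X(b)‖ ≤ −C · ‖a − b‖ · log ‖a − b‖ whenever 0 < ‖a − b‖ < 1. Let T > 0 and let γ₁, γ₂ : [0, T] → E be two differentiable curves satisfying γ_i'(t) = X(γ_i(t)) for all t ∈ [0, T] and γ₁(0) = γ₂(0). Then γ₁(t) = γ₂(t) for all t ∈ [0, T]. In other words, vector fields with modulus of continuity ε log ε are uniquely integrable: the ODE x' = X(x) has at most one solution for a given initial condition. -/

import Mathlib

/-!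
Write `φ(r) = -r log r`, so `f = γ₁ - γ₂` satisfies `‖f'‖ ≤ C φ(‖f‖)` wherever `0 < ‖f‖ < 1`.
The functions `B_L(t) = exp (-L e^{-2Ct})` solve `B' = 2C φ(B)` and take values in `(0, 1)`, so
wherever `‖f‖` touches `B_L` it grows strictly slower than `B_L`; as `‖f(0)‖ = 0 < B_L(0)`, the
fence `‖f‖ ≤ B_L` holds for every `L > 0`. Because `∫₀ dr / φ(r)` diverges, these barriers can be
pushed down to `0`: `B_L(t) → 0` as `L → ∞`.
-/

open Real Set Filter Topology

lemma Real.negMulLog_pos {x : ℝ} (h0 : 0 < x) (h1 : x < 1) : 0 < negMulLog x := by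
  rw [negMulLog, neg_mul, neg_pos]
  exact mul_neg_of_pos_of_neg h0 (log_neg h0 h1)

noncomputable def osgoodBarrier (k L t : ℝ) : ℝ := exp (-(L * exp (-(k * t))))

lemma osgoodBarrier_pos (k L t : ℝ) : 0 < osgoodBarrier k L t := exp_pos _

lemma osgoodBarrier_lt_one {L : ℝ} (hL : 0 < L) (k t : ℝ) : osgoodBarrier k L t < 1 :=
  exp_lt_one_iff.mpr (neg_neg_of_pos (mul_pos hL (exp_pos _)))

lemma hasDerivAt_osgoodBarrier (k L t : ℝ) :
    HasDerivAt (osgoodBarrier k L) (k * negMulLog (osgoodBarrier k L t)) t := by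
  convert (((hasDerivAt_id' t).const_mul k).neg.exp.const_mul L).neg.exp using 1
  · rfl
  · simp only [Pi.neg_apply]
    rw [negMulLog, osgoodBarrier, log_exp]
    ring

lemma tendsto_osgoodBarrier_atTop (k t : ℝ) :
    Tendsto (fun L ↦ osgoodBarrier k L t) atTop (𝓝 0) :=
  tendsto_exp_atBot.comp <| tendsto_neg_atTop_atBot.comp <|
    tendsto_id.atTop_mul_const (exp_pos _)

section Comparison

variable {E : Type*} [NormedAddCommGroup E] [NormedSpace ℝ E] {f f' : ℝ → E} {a b C : ℝ}

lemma norm_le_osgoodBarrier_of_norm_deriv_le_mul_negMulLog (hC : 0 < C)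
    (hf : ContinuousOn f (Icc a b)) (hf' : ∀ t ∈ Ico a b, HasDerivWithinAt f (f' t) (Ici t) t)
    (bound : ∀ t ∈ Ico a b, 0 < ‖f t‖ → ‖f t‖ < 1 → ‖f' t‖ ≤ C * negMulLog ‖f t‖)
    (ha : f a = 0) {L : ℝ} (hL : 0 < L) {t : ℝ} (ht : t ∈ Icc a b) :
    ‖f t‖ ≤ osgoodBarrier (2 * C) L t := by
  refine image_norm_le_of_norm_deriv_right_lt_deriv_boundary hf hf' ?_
    (hasDerivAt_osgoodBarrier _ L) ?_ ht
  · rw [ha, norm_zero]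
    exact (osgoodBarrier_pos _ _ _).le
  · intro s hs hfs
    have h0 := osgoodBarrier_pos (2 * C) L s
    have h1 := osgoodBarrier_lt_one hL (2 * C) s
    have hφ := negMulLog_pos h0 h1
    calc ‖f' s‖ ≤ C * negMulLog (osgoodBarrier (2 * C) L s) :=
          hfs ▸ bound s hs (hfs ▸ h0) (hfs ▸ h1)
      _ < 2 * C * negMulLog (osgoodBarrier (2 * C) L s) := by nlinarith

theorem eq_zero_of_norm_deriv_le_mul_negMulLog (hC : 0 < C)
    (hf : ContinuousOn f (Icc a b)) (hf' : ∀ t ∈ Ico a b, HasDerivWithinAt f (f' t) (Ici t) t)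
    (bound : ∀ t ∈ Ico a b, 0 < ‖f t‖ → ‖f t‖ < 1 → ‖f' t‖ ≤ C * negMulLog ‖f t‖)
    (ha : f a = 0) : ∀ t ∈ Icc a b, f t = 0 := by
  intro t ht
  have hle : ‖f t‖ ≤ 0 :=
    ge_of_tendsto (tendsto_osgoodBarrier_atTop (2 * C) t) <|
      (eventually_gt_atTop 0).mono fun _ hL ↦
        norm_le_osgoodBarrier_of_norm_deriv_le_mul_negMulLog hC hf hf' bound ha hL ht
  exact norm_le_zero_iff.mp hle

end Comparison

theorem osgood_uniqueness_eps_log_eps_general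
    {E : Type*} [NormedAddCommGroup E] [NormedSpace ℝ E]
    (X : E → E)
    (C : ℝ) (hC : 0 < C)
    (hX : ∀ a b : E, 0 < ‖a - b‖ → ‖a - b‖ < 1 →
      ‖X a - X b‖ ≤ -C * ‖a - b‖ * Real.log ‖a - b‖)
    (T : ℝ)
    (γ₁ γ₂ : ℝ → E)
    (hγ₁ : ∀ t ∈ Set.Icc 0 T, HasDerivAt γ₁ (X (γ₁ t)) t)
    (hγ₂ : ∀ t ∈ Set.Icc 0 T, HasDerivAt γ₂ (X (γ₂ t)) t)
    (h0 : γ₁ 0 = γ₂ 0) :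
    ∀ t ∈ Set.Icc 0 T, γ₁ t = γ₂ t := by
  have hdiff : ∀ t ∈ Icc 0 T, HasDerivAt (fun s ↦ γ₁ s - γ₂ s) (X (γ₁ t) - X (γ₂ t)) t :=
    fun t ht ↦ (hγ₁ t ht).sub (hγ₂ t ht)
  have hzero := eq_zero_of_norm_deriv_le_mul_negMulLog hC
    (fun t ht ↦ (hdiff t ht).continuousAt.continuousWithinAt)
    (fun t ht ↦ (hdiff t (Ico_subset_Icc_self ht)).hasDerivWithinAt)
    (fun t _ hpos hlt ↦ (hX _ _ hpos hlt).trans_eq (by rw [negMulLog]; ring))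
    (sub_eq_zero.mpr h0)
  exact fun t ht ↦ sub_eq_zero.mp (hzero t ht)

/-- Osgood-type uniqueness: a continuous vector field on a real Banach space with modulus of
continuity `ε log ε` is uniquely integrable. -/
theorem osgood_uniqueness_eps_log_eps
    {E : Type*} [NormedAddCommGroup E] [NormedSpace ℝ E] [CompleteSpace E]
    (X : E → E) (hXcont : Continuous X)
    (C : ℝ) (hC : 0 < C)
    (hX : ∀ a b : E, 0 < ‖a - b‖ → ‖a - b‖ < 1 →
      ‖X a - X b‖ ≤ -C * ‖a - b‖ * Real.log ‖a - b‖)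
    (T : ℝ) (hT : 0 < T)
    (γ₁ γ₂ : ℝ → E)
    (hγ₁ : ∀ t ∈ Set.Icc 0 T, HasDerivAt γ₁ (X (γ₁ t)) t)
    (hγ₂ : ∀ t ∈ Set.Icc 0 T, HasDerivAt γ₂ (X (γ₂ t)) t)
    (h0 : γ₁ 0 = γ₂ 0) :
    ∀ t ∈ Set.Icc 0 T, γ₁ t = γ₂ t :=
  osgood_uniqueness_eps_log_eps_general X C hC hX T γ₁ γ₂ hγ₁ hγ₂ h0
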